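/- Inertia of subgroups is transitive: if A ≤ B ≤ C are groups, A is inert in B, and B is inert in C, then A is inert in C. -/
import Mathlib

/-- A subgroup `H ≤ G` is inert in `G` if for every finitely generated subgroup
`K ≤ G`, the intersection `H ⊓ K` is finitely generated of rank at most `rank K`. -/
def Inert {G : Type*} [Group G] (H : Subgroup G) : Prop :=
  ∀ K : Subgroup G, ∀ hK : Group.FG K,
    ∃ h : Group.FG ↥(H ⊓ K), @Group.rank ↥(H ⊓ K) _ h ≤ @Group.rank ↥K _ hK

/-- Inertia is transitive: if `A ≤ B ≤ C`, `A` is inert in `B`, and `B` is inert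
in `C`, then `A` is inert in `C`. -/
theorem inert_trans {C : Type*} [Group C] (A B : Subgroup C) (hAB : A ≤ B)
    (h1 : Inert (A.subgroupOf B)) (h2 : Inert B) : Inert A := by
  intro K hK
  obtain ⟨hBK, hBKle⟩ := h2 K hK
  set K' : Subgroup B := (B ⊓ K).subgroupOf B with hK'def
  have eK' : ↥K' ≃* ↥(B ⊓ K) := Subgroup.subgroupOfEquivOfLe inf_le_left
  have hK' : Group.FG ↥K' := by
    have := hBK
    exact @Group.fg_of_surjective _ _ _ _ this eK'.symm.toMonoidHom eK'.symm.surjective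
  obtain ⟨hA', hA'le⟩ := h1 K' hK'
  have heq : A.subgroupOf B ⊓ K' = (A ⊓ K).subgroupOf B := by
    rw [hK'def, Subgroup.subgroupOf, Subgroup.subgroupOf, Subgroup.subgroupOf,
      ← Subgroup.comap_inf, ← inf_assoc, inf_eq_left.mpr hAB]
  have hAKleB : A ⊓ K ≤ B := le_trans inf_le_left hAB
  have e : ↥(A.subgroupOf B ⊓ K') ≃* ↥(A ⊓ K) :=
    (MulEquiv.subgroupCongr heq).trans (Subgroup.subgroupOfEquivOfLe hAKleB)
  have hfg : Group.FG ↥(A ⊓ K) :=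
    @Group.fg_of_surjective _ _ _ _ hA' e.toMonoidHom e.surjective
  refine ⟨hfg, ?_⟩
  calc @Group.rank ↥(A ⊓ K) _ hfg
      = @Group.rank ↥(A.subgroupOf B ⊓ K') _ hA' :=
        (@Group.rank_congr _ _ _ _ hA' hfg e).symm
    _ ≤ @Group.rank ↥K' _ hK' := hA'le
    _ = @Group.rank ↥(B ⊓ K) _ hBK := @Group.rank_congr _ _ _ _ hK' hBK eK'
    _ ≤ @Group.rank ↥K _ hK := hBKle
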